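/- For every N ≥ 2 there is a constant C_N depending only on N with the following property. Let F(X,Y) = Σ_{i,j=1}^N f_{ij} X_i Y_j be a symmetric bilinear form over ℚ with associated quadratic form F(X) = F(X,X). If there exists a nonsingular zero of F over ℚ, i.e., a point x ∈ ℚ^N with F(x) = 0 and F(x, y) ≠ 0 for some y ∈ ℚ^N, then there exists such a nonsingular zero x with H(x) ≤ C_N · H(F)^{(N−1)/2}. -/

import Mathlib

/-!
Cassels' descent. Clear denominators so that `F` has integer coefficients of size at most
`H = H(F)`, and take a nonsingular integral zero `a` of minimal height `h`, attained at the
coordinate `a i₀ = ±h`. Dirichlet's simultaneous approximation gives `0 < m ≤ K ^ (N - 1)` and an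
integer vector `z` with `a i₀ • z = m • a + s`, where `K * |s| ≤ h`. The integer vector
`b = F(z) a - 2 F(a, z) z` is again a zero of `F`, and `h² b = F(s) a - 2 F(a, s) s`, so
`|b| ≤ 3 N² H h / K²`. With `K ≈ 2 N √H` this is `< h`, so by minimality `b` vanishes or is
singular. A singular `b ≠ 0` forces `a` to be singular; `b = 0` forces `F(z) = 0`, and then
either `z` (of height `≤ m`) or `a - (a i₀ / m) • z` (when `z` lies in the radical) is a
nonsingular zero of height `< h` as soon as `h > 2 K ^ (N - 1)`.
-/

/-- Projective (homogeneous) height of a rational vector: the sup-norm of a primitive integer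
vector proportional to it. -/
noncomputable def projHeight {ι : Type*} [Fintype ι] (x : ι → ℚ) : ℕ :=
  sInf {m : ℕ | ∃ y : ι → ℤ,
    (∃ c : ℚ, c ≠ 0 ∧ ∀ i, (y i : ℚ) = c * x i) ∧
    Finset.univ.gcd y = 1 ∧ m = Finset.univ.sup fun i => (y i).natAbs}

open Finset

namespace LinearMap.BilinForm

variable {R M : Type*} [CommRing R] [AddCommGroup M] [Module R M] {B : LinearMap.BilinForm R M}

variable (B) in
def IsNonsingularZero (x : M) : Prop := B x x = 0 ∧ B x ≠ 0

variable (B) in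
/-- `B z z` times the reflection of `a` in the hyperplane orthogonal to `z`; the scaling avoids
dividing by `B z z`. -/
def scaledReflection (z a : M) : M := B z z • a - (2 * B a z) • z

theorem scaledReflection_apply_self (hB : B.IsSymm) {a : M} (ha : B a a = 0) (z : M) :
    B (B.scaledReflection z a) (B.scaledReflection z a) = 0 := by
  simp only [scaledReflection, map_sub, map_smul, LinearMap.sub_apply, LinearMap.smul_apply,
    smul_eq_mul, ha, hB.eq z a]
  ring

theorem scaledReflection_apply_left (hB : B.IsSymm) {a : M} (ha : B a a = 0) (z : M) :
    B (B.scaledReflection z a) a = -(2 * B a z ^ 2) := by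
  simp only [scaledReflection, map_sub, map_smul, LinearMap.sub_apply, LinearMap.smul_apply,
    smul_eq_mul, ha, hB.eq z a]
  ring

theorem sq_smul_scaledReflection (hB : B.IsSymm) {a z s : M} (ha : B a a = 0) {A m : R}
    (h : A • z = m • a + s) : A ^ 2 • B.scaledReflection z a = B.scaledReflection s a := by
  have hz : B (A • z) (A • z) = A ^ 2 * B z z := by
    simp only [map_smul, LinearMap.smul_apply, smul_eq_mul]; ring
  have haz : B a (A • z) = A * B a z := by simp
  have e : A ^ 2 • B.scaledReflection z a =
      B (A • z) (A • z) • a - (2 * B a (A • z)) • (A • z) := by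
    rw [hz, haz, scaledReflection]; module
  rw [e, h, scaledReflection]
  simp only [map_add, map_smul, LinearMap.add_apply, LinearMap.smul_apply, smul_eq_mul, ha,
    hB.eq s a]
  module

theorem IsNonsingularZero.ne_zero {x : M} (hx : B.IsNonsingularZero x) : x ≠ 0 := by
  rintro rfl; exact hx.2 (map_zero B)

theorem IsNonsingularZero.add_smul (hB : B.IsSymm) {a z : M} (ha : B.IsNonsingularZero a)
    (hz : B z = 0) (q : R) : B.IsNonsingularZero (a + q • z) := by
  have hza : B a z = 0 := by rw [hB.eq, hz, LinearMap.zero_apply]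
  refine ⟨?_, ?_⟩
  · simp [hz, hza, ha.1]
  · simpa [hz] using ha.2

variable [NoZeroDivisors R]

theorem eq_zero_of_apply_smul_eq_zero {a : M} (ha : B a ≠ 0) {c : R} (h : B (c • a) = 0) :
    c = 0 := by
  obtain ⟨y, hy⟩ := DFunLike.ne_iff.1 ha
  have hcy := congr($h y)
  simp only [map_smul, LinearMap.smul_apply, smul_eq_mul, LinearMap.zero_apply] at hcy
  exact (mul_eq_zero.1 hcy).resolve_right hy

variable [NeZero (2 : R)]

theorem IsNonsingularZero.apply_eq_zero_of_scaledReflection_apply_eq_zero (hB : B.IsSymm)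
    {a z : M} (ha : B.IsNonsingularZero a) (h : B (B.scaledReflection z a) a = 0) :
    B a z = 0 := by
  rw [scaledReflection_apply_left hB ha.1, neg_eq_zero] at h
  exact pow_eq_zero_iff two_ne_zero |>.1 ((mul_eq_zero.1 h).resolve_left two_ne_zero)

theorem IsNonsingularZero.scaledReflection (hB : B.IsSymm) {a : M} (ha : B.IsNonsingularZero a)
    {z : M} (hb : B.scaledReflection z a ≠ 0) :
    B.IsNonsingularZero (B.scaledReflection z a) := by
  refine ⟨scaledReflection_apply_self hB ha.1 z, fun hb₀ => hb ?_⟩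
  have hza := ha.apply_eq_zero_of_scaledReflection_apply_eq_zero hB
    (by rw [hb₀, LinearMap.zero_apply])
  rw [BilinForm.scaledReflection, hza, mul_zero, zero_smul, sub_zero] at hb₀ ⊢
  rw [eq_zero_of_apply_smul_eq_zero ha.2 hb₀, zero_smul]

theorem IsNonsingularZero.apply_self_eq_zero_of_scaledReflection_eq_zero (hB : B.IsSymm)
    {a z : M} (ha : B.IsNonsingularZero a) (hb : B.scaledReflection z a = 0) : B z z = 0 := by
  have hza := ha.apply_eq_zero_of_scaledReflection_apply_eq_zero hB
    (by rw [hb, map_zero, LinearMap.zero_apply])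
  rw [BilinForm.scaledReflection, hza, mul_zero, zero_smul, sub_zero] at hb
  exact eq_zero_of_apply_smul_eq_zero ha.2 (by rw [hb, map_zero])

end LinearMap.BilinForm

/-- Dirichlet's simultaneous approximation theorem, by pigeonhole on the boxes of side `1 / K`
containing the fractional parts of `m • α`. -/
theorem exists_nat_abs_mul_sub_lt {𝕜 ι : Type*} [Field 𝕜] [LinearOrder 𝕜]
    [IsStrictOrderedRing 𝕜] [FloorRing 𝕜] [Fintype ι] (α : ι → 𝕜) {K : ℕ} (hK : 0 < K) :
    ∃ m : ℕ, 0 < m ∧ m ≤ K ^ Fintype.card ι ∧ ∃ z : ι → ℤ, ∀ i, K * |m * α i - z i| < 1 := by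
  classical
  let box (m : ℕ) (i : ι) : ℕ := ⌊K * Int.fract (m * α i)⌋₊
  have hbox : ∀ m ∈ range (K ^ Fintype.card ι + 1),
      box m ∈ Fintype.piFinset fun _ => range K := by
    intro m _
    simp only [Fintype.mem_piFinset, mem_range, box]
    intro i
    rw [Nat.floor_lt (by positivity)]
    simpa using mul_lt_of_lt_one_right (by positivity) (Int.fract_lt_one _)
  obtain ⟨m₁, hm₁, m₂, hm₂, hne, heq⟩ := exists_ne_map_eq_of_card_lt_of_maps_to (by simp) hbox
  wlog hlt : m₁ < m₂ generalizing m₁ m₂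
  · exact this m₂ hm₂ m₁ hm₁ hne.symm heq.symm (hne.lt_or_gt.resolve_left hlt)
  rw [mem_range] at hm₁ hm₂
  refine ⟨m₂ - m₁, by omega, by omega, fun i => ⌊m₂ * α i⌋ - ⌊m₁ * α i⌋, fun i => ?_⟩
  have hfloor : ⌊K * Int.fract (m₂ * α i)⌋ = ⌊K * Int.fract (m₁ * α i)⌋ := by
    rw [← Int.natCast_floor_eq_floor (by positivity),
      ← Int.natCast_floor_eq_floor (by positivity)]
    exact congr($(heq.symm) i)
  have key : K * (((m₂ - m₁ : ℕ) : 𝕜) * α i - ((⌊m₂ * α i⌋ - ⌊m₁ * α i⌋ : ℤ) : 𝕜)) =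
      K * Int.fract (m₂ * α i) - K * Int.fract (m₁ * α i) := by
    rw [Nat.cast_sub hlt.le, Int.fract, Int.fract]; push_cast; ring
  rw [← abs_of_nonneg (Nat.cast_nonneg (α := 𝕜) K), ← abs_mul, key]
  exact Int.abs_sub_lt_one_of_floor_eq_floor hfloor

section IntVectors

variable {ι : Type*} [Fintype ι]

def intHeight (x : ι → ℤ) : ℕ := univ.sup fun i => (x i).natAbs

theorem abs_le_intHeight (x : ι → ℤ) (i : ι) : |x i| ≤ intHeight x := by
  rw [← Int.natCast_natAbs, Nat.cast_le]
  exact le_sup (f := fun i => (x i).natAbs) (mem_univ i)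

theorem intHeight_le_iff {x : ι → ℤ} {n : ℕ} : intHeight x ≤ n ↔ ∀ i, |x i| ≤ n := by
  simp only [intHeight, Finset.sup_le_iff, mem_univ, true_implies, ← Int.natCast_natAbs,
    Nat.cast_le]

theorem intHeight_lt_iff {x : ι → ℤ} {n : ℕ} (hn : 0 < n) :
    intHeight x < n ↔ ∀ i, |x i| < n := by
  simp only [intHeight, Finset.sup_lt_iff (bot_lt_iff_ne_bot.2 hn.ne'), mem_univ, true_implies,
    ← Int.natCast_natAbs, Nat.cast_lt]

theorem intHeight_pos {x : ι → ℤ} (hx : x ≠ 0) : 0 < intHeight x := by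
  obtain ⟨i, hi⟩ := Function.ne_iff.1 hx
  exact_mod_cast (abs_pos.2 hi).trans_le (abs_le_intHeight x i)

theorem exists_abs_eq_intHeight [Nonempty ι] (x : ι → ℤ) : ∃ i, |x i| = intHeight x := by
  obtain ⟨i, -, hi⟩ := exists_mem_eq_sup univ univ_nonempty fun i => (x i).natAbs
  exact ⟨i, by rw [intHeight, hi, Int.natCast_natAbs]⟩

theorem abs_mul_abs_le_of_smul_eq {A c d : ℤ} {v a s : ι → ℤ} (h : A • v = c • a + d • s)
    (i : ι) : |A| * |v i| ≤ |c| * intHeight a + |d| * intHeight s := by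
  have hi := congr($h i)
  simp only [Pi.smul_apply, Pi.add_apply, smul_eq_mul] at hi
  rw [← abs_mul, hi]
  refine (abs_add_le _ _).trans ?_
  rw [abs_mul, abs_mul]
  gcongr <;> exact abs_le_intHeight _ _

theorem exists_intHeight_smul_sub_smul_le [DecidableEq ι] (a : ι → ℤ) {i₀ : ι}
    (hA : a i₀ ≠ 0) {K : ℕ} (hK : 0 < K) : ∃ m : ℕ, 0 < m ∧ m ≤ K ^ (Fintype.card ι - 1) ∧
      ∃ z : ι → ℤ, K * intHeight (a i₀ • z - (m : ℤ) • a) ≤ |a i₀| := by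
  obtain ⟨m, hm, hmK, z', hz'⟩ :=
    exists_nat_abs_mul_sub_lt (fun i : {i // i ≠ i₀} => (a i : ℚ) / a i₀) hK
  rw [Fintype.card_subtype_compl, Fintype.card_subtype_eq] at hmK
  set z : ι → ℤ := fun i => if h : i = i₀ then m else z' ⟨i, h⟩
  refine ⟨m, hm, hmK, z, ?_⟩
  have : Nonempty ι := ⟨i₀⟩
  obtain ⟨i, hi⟩ := exists_abs_eq_intHeight (a i₀ • z - (m : ℤ) • a)
  rw [← hi]
  by_cases h : i = i₀
  · subst h; simp [z, mul_comm]
  · have hAq : (0 : ℚ) < |(a i₀ : ℚ)| := by positivity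
    have hlt := mul_lt_mul_of_pos_right (hz' ⟨i, h⟩) hAq
    simp only [z, Pi.sub_apply, Pi.smul_apply, smul_eq_mul, dif_neg h]
    rw [← Int.cast_le (R := ℚ)]
    push_cast
    calc (K : ℚ) * |(a i₀ : ℚ) * z' ⟨i, h⟩ - m * a i|
        = K * |(m : ℚ) * ((a i : ℚ) / a i₀) - z' ⟨i, h⟩| * |(a i₀ : ℚ)| := by
          rw [mul_assoc, ← abs_mul, abs_sub_comm]; congr 2; field_simp
      _ ≤ |(a i₀ : ℚ)| := by linarith

theorem intHeight_le_of_smul_eq {A : ℤ} {m : ℕ} {a z s : ι → ℤ} (hA0 : A ≠ 0)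
    (hA : |A| = intHeight a) {K : ℕ} (hK : 2 ≤ K) (hzs : A • z = (m : ℤ) • a + s)
    (hs : K * intHeight s ≤ |A|) : intHeight z ≤ m := by
  rw [intHeight_le_iff]
  intro i
  have hi := abs_mul_abs_le_of_smul_eq
    (show A • z = (m : ℤ) • a + (1 : ℤ) • s by rwa [one_smul]) i
  rw [← hA, abs_one, Nat.abs_cast] at hi
  have hA' : 0 < |A| := abs_pos.2 hA0
  have hK' : (2 : ℤ) ≤ K := by exact_mod_cast hK
  by_contra! hlt
  nlinarith

theorem intHeight_add_smul_lt {A : ℤ} {m : ℕ} {a z s : ι → ℤ} (hm : 0 < m)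
    (hA : |A| = intHeight a) {K : ℕ} (hK : 2 ≤ K) (hzs : A • z = (m : ℤ) • a + s)
    (hs : K * intHeight s ≤ |A|) (hmA : 2 * m < |A|) :
    intHeight (a + (-(A / m)) • z) < intHeight a := by
  have hx : A • (a + (-(A / m)) • z) = (A % m) • a + (-(A / m)) • s := by
    rw [smul_add, smul_comm, hzs, Int.emod_def]; module
  rw [intHeight_lt_iff (by omega)]
  intro i
  have hi := abs_mul_abs_le_of_smul_eq hx i
  rw [← hA] at hi ⊢
  have hm' : (0 : ℤ) < m := by exact_mod_cast hm
  have hr : |A % m| < m := by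
    rw [abs_of_nonneg (Int.emod_nonneg _ hm'.ne')]; exact Int.emod_lt_of_pos _ hm'
  have hq : |-(A / m)| ≤ |A| := by rw [abs_neg]; exact Int.abs_ediv_le_abs _ _
  have hA' : 0 < |A| := by omega
  have hxi : |(a + (-(A / m)) • z) i| ≤ |A % m| + intHeight s := by
    refine le_of_mul_le_mul_left ?_ hA'
    nlinarith [(Nat.cast_nonneg (intHeight s) : (0 : ℤ) ≤ _)]
  have hK' : (2 : ℤ) ≤ K := by exact_mod_cast hK
  by_contra! hlt
  nlinarith

theorem exists_intCast_eq_mul (x : ι → ℚ) :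
    ∃ d : ℚ, d ≠ 0 ∧ ∃ X : ι → ℤ, ∀ i, (X i : ℚ) = d * x i := by
  obtain ⟨⟨d, hd⟩, h⟩ := IsLocalization.exist_integer_multiples_of_finite (nonZeroDivisors ℤ) x
  choose X hX using h
  exact ⟨d, by exact_mod_cast nonZeroDivisors.ne_zero hd, X, fun i => by simpa using hX i⟩

theorem exists_eq_smul_gcd_eq_one {W : ι → ℤ} (hW : W ≠ 0) :
    ∃ g : ℤ, g ≠ 0 ∧ ∃ Y : ι → ℤ, univ.gcd Y = 1 ∧ W = g • Y := by
  obtain ⟨i, hi⟩ := Function.ne_iff.1 hW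
  obtain ⟨Y, hY, hY1⟩ := extract_gcd W ⟨i, mem_univ i⟩
  exact ⟨univ.gcd W, fun h => hi (gcd_eq_zero_iff.1 h i (mem_univ i)), Y, hY1,
    funext fun i => hY i (mem_univ i)⟩

theorem projHeight_le_intHeight {x : ι → ℚ} {W : ι → ℤ} (hW : W ≠ 0) {c : ℚ} (hc : c ≠ 0)
    (hWx : ∀ i, (W i : ℚ) = c * x i) : projHeight x ≤ intHeight W := by
  obtain ⟨g, hg, Y, hY, rfl⟩ := exists_eq_smul_gcd_eq_one hW
  have hgq : (g : ℚ) ≠ 0 := by exact_mod_cast hg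
  calc projHeight x ≤ intHeight Y := Nat.sInf_le ⟨Y, ⟨c / g, div_ne_zero hc hgq, fun i => by
        rw [div_mul_eq_mul_div, eq_div_iff hgq, ← hWx, Pi.smul_apply, smul_eq_mul]; push_cast
        ring⟩, hY, rfl⟩
    _ ≤ intHeight (g • Y) := sup_mono_fun fun i _ => by
        simp [Int.natAbs_mul, Nat.le_mul_of_pos_left _ (Int.natAbs_pos.2 hg)]

theorem exists_intHeight_eq_projHeight {x : ι → ℚ} (hx : x ≠ 0) :
    ∃ c : ℚ, c ≠ 0 ∧ ∃ W : ι → ℤ, (∀ i, (W i : ℚ) = c * x i) ∧ intHeight W = projHeight x := by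
  obtain ⟨d, hd, X, hX⟩ := exists_intCast_eq_mul x
  have hX0 : X ≠ 0 := by
    obtain ⟨i, hi⟩ := Function.ne_iff.1 hx
    refine Function.ne_iff.2 ⟨i, ?_⟩
    rw [Pi.zero_apply, ne_eq, ← Int.cast_eq_zero (α := ℚ), hX]
    simpa [hd] using hi
  obtain ⟨g, hg, Y, hY, rfl⟩ := exists_eq_smul_gcd_eq_one hX0
  have hgq : (g : ℚ) ≠ 0 := by exact_mod_cast hg
  have hne : {m : ℕ | ∃ y : ι → ℤ, (∃ c : ℚ, c ≠ 0 ∧ ∀ i, (y i : ℚ) = c * x i) ∧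
      univ.gcd y = 1 ∧ m = univ.sup fun i => (y i).natAbs}.Nonempty :=
    ⟨_, Y, ⟨d / g, div_ne_zero hd hgq, fun i => by
      rw [div_mul_eq_mul_div, eq_div_iff hgq, ← hX, Pi.smul_apply, smul_eq_mul]; push_cast
      ring⟩, hY, rfl⟩
  obtain ⟨W, ⟨c, hc, hW⟩, -, hWx⟩ := Nat.sInf_mem hne
  exact ⟨c, hc, W, hW, hWx.symm⟩

theorem exists_isSymm_intMatrix_eq_mul {f : ι → ι → ℚ} (hf : ∀ i j, f i j = f j i)
    (hF : (fun p : ι × ι => f p.1 p.2) ≠ 0) :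
    ∃ c : ℚ, c ≠ 0 ∧ ∃ G : Matrix ι ι ℤ, G.IsSymm ∧ (∀ i j, (G i j : ℚ) = c * f i j) ∧
      ∀ i j, |G i j| ≤ projHeight fun p : ι × ι => f p.1 p.2 := by
  obtain ⟨c, hc, w, hwf, hwH⟩ := exists_intHeight_eq_projHeight hF
  have hGf : ∀ i j, (Matrix.of fun i j => w (i, j)) i j = c * f i j := fun i j => hwf (i, j)
  refine ⟨c, hc, Matrix.of fun i j => w (i, j),
    Matrix.IsSymm.ext fun i j => Int.cast_injective (α := ℚ) ?_, hGf,
    fun i j => hwH ▸ abs_le_intHeight w (i, j)⟩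
  rw [hGf, hGf, hf]

theorem one_le_projHeight {x : ι → ℚ} (hx : x ≠ 0) : 1 ≤ projHeight x := by
  obtain ⟨c, hc, W, hW, hWx⟩ := exists_intHeight_eq_projHeight hx
  exact hWx ▸ intHeight_pos fun h => hx (funext fun i => by simpa [h, hc] using (hW i).symm)

end IntVectors

section IntForms

open LinearMap.BilinForm

variable {ι : Type*} [Fintype ι] [DecidableEq ι] {G : Matrix ι ι ℤ} {H K : ℕ}

theorem abs_toBilin'_apply_le (hGH : ∀ i j, |G i j| ≤ H) (x y : ι → ℤ) :
    |G.toBilin' x y| ≤ Fintype.card ι ^ 2 * H * intHeight x * intHeight y := by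
  rw [Matrix.toBilin'_apply]
  calc |∑ i, ∑ j, x i * G i j * y j| ≤ ∑ i, ∑ j, |x i * G i j * y j| :=
        (abs_sum_le_sum_abs _ _).trans (sum_le_sum fun i _ => abs_sum_le_sum_abs _ _)
    _ ≤ ∑ i : ι, ∑ j : ι, (intHeight x * H * intHeight y : ℤ) := by
        gcongr with i _ j _
        rw [abs_mul, abs_mul]
        gcongr
        exacts [abs_le_intHeight x i, hGH i j, abs_le_intHeight y j]
    _ = _ := by
        simp only [sum_const, card_univ, nsmul_eq_mul]
        ring

theorem intHeight_scaledReflection_lt (hG : G.IsSymm) (hGH : ∀ i j, |G i j| ≤ H)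
    (hKH : 3 * Fintype.card ι ^ 2 * H < K ^ 2) {A m : ℤ} {a z s : ι → ℤ}
    (ha : G.toBilin' a a = 0) (hA0 : A ≠ 0) (hA : |A| = intHeight a) (hzs : A • z = m • a + s)
    (hs : K * intHeight s ≤ |A|) :
    intHeight (G.toBilin'.scaledReflection z a) < intHeight a := by
  set B := G.toBilin'
  have e : A ^ 2 • B.scaledReflection z a = B s s • a + (-(2 * B a s)) • s := by
    rw [sq_smul_scaledReflection (Matrix.isSymm_toBilin'_iff_isSymm.2 hG) ha hzs,
      scaledReflection]
    module
  have hA' : 0 < |A| := abs_pos.2 hA0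
  rw [intHeight_lt_iff (by omega)]
  intro i
  have hi := abs_mul_abs_le_of_smul_eq e i
  rw [← hA] at hi ⊢
  rw [abs_neg, abs_mul, abs_two, abs_pow] at hi
  set P : ℤ := Fintype.card ι ^ 2 * H
  set S : ℤ := (intHeight s : ℤ)
  have hss : |B s s| ≤ P * S * S := abs_toBilin'_apply_le hGH s s
  have has : |B a s| ≤ P * |A| * S := hA ▸ abs_toBilin'_apply_le hGH a s
  have hP : 0 ≤ P := by positivity
  have hS : 0 ≤ S := by positivity
  have hb : |A| * |(B.scaledReflection z a) i| ≤ 3 * P * S ^ 2 := by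
    refine le_of_mul_le_mul_left ?_ hA'
    calc |A| * (|A| * |(B.scaledReflection z a) i|) ≤ |B s s| * |A| + 2 * |B a s| * S := by
          linarith
      _ ≤ (P * S * S) * |A| + 2 * (P * |A| * S) * S := by gcongr
      _ = |A| * (3 * P * S ^ 2) := by ring
  have hKS : (K * S) ^ 2 ≤ |A| ^ 2 := pow_le_pow_left₀ (by positivity) hs 2
  have hKH' : 3 * P < (K : ℤ) ^ 2 := by rw [← mul_assoc]; exact_mod_cast hKH
  refine lt_of_mul_lt_mul_left ?_ hA'.le
  nlinarith [abs_nonneg ((B.scaledReflection z a) i)]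

theorem exists_isNonsingularZero_intHeight_lt (hG : G.IsSymm) (hGH : ∀ i j, |G i j| ≤ H)
    (hK : 2 ≤ K) (hKH : 3 * Fintype.card ι ^ 2 * H < K ^ 2) {a : ι → ℤ}
    (ha : G.toBilin'.IsNonsingularZero a) (hah : 2 * K ^ (Fintype.card ι - 1) < intHeight a) :
    ∃ x, G.toBilin'.IsNonsingularZero x ∧ intHeight x < intHeight a := by
  set B := G.toBilin'
  have hB : B.IsSymm := Matrix.isSymm_toBilin'_iff_isSymm.2 hG
  obtain ⟨i₀, hA⟩ : ∃ i₀, |a i₀| = intHeight a := by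
    obtain ⟨i, -⟩ := Function.ne_iff.1 ha.ne_zero
    have : Nonempty ι := ⟨i⟩
    exact exists_abs_eq_intHeight a
  have hA0 : a i₀ ≠ 0 := by rw [← abs_pos, hA]; exact_mod_cast (by omega : 0 < intHeight a)
  obtain ⟨m, hm, hmK, z, hs⟩ := exists_intHeight_smul_sub_smul_le a hA0 (by omega : 0 < K)
  have hzs : a i₀ • z = (m : ℤ) • a + (a i₀ • z - (m : ℤ) • a) := by abel
  by_cases hb : B.scaledReflection z a = 0
  · have hzz := ha.apply_self_eq_zero_of_scaledReflection_eq_zero hB hb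
    by_cases hz : B z = 0
    · exact ⟨_, ha.add_smul hB hz _, intHeight_add_smul_lt hm hA hK hzs hs (by omega)⟩
    · exact ⟨z, ⟨hzz, hz⟩, (intHeight_le_of_smul_eq hA0 hA hK hzs hs).trans_lt (by omega)⟩
  · exact ⟨_, ha.scaledReflection hB hb,
      intHeight_scaledReflection_lt hG hGH hKH ha.1 hA0 hA hzs hs⟩

theorem exists_isNonsingularZero_intHeight_le (hG : G.IsSymm) (hGH : ∀ i j, |G i j| ≤ H)
    (hK : 2 ≤ K) (hKH : 3 * Fintype.card ι ^ 2 * H < K ^ 2)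
    (h : ∃ a, G.toBilin'.IsNonsingularZero a) :
    ∃ a, G.toBilin'.IsNonsingularZero a ∧ intHeight a ≤ 2 * K ^ (Fintype.card ι - 1) := by
  classical
  have hex : ∃ n, ∃ a, G.toBilin'.IsNonsingularZero a ∧ intHeight a = n :=
    h.elim fun a ha => ⟨_, a, ha, rfl⟩
  obtain ⟨a, ha, han⟩ := Nat.find_spec hex
  refine ⟨a, ha, not_lt.1 fun hlt => ?_⟩
  obtain ⟨x, hx, hxa⟩ := exists_isNonsingularZero_intHeight_lt hG hGH hK hKH ha hlt
  exact Nat.find_min hex (han ▸ hxa) ⟨x, hx, rfl⟩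

theorem exists_isNonsingularZero_intHeight_le_sqrt (hG : G.IsSymm) (hGH : ∀ i j, |G i j| ≤ H)
    (h : ∃ a, G.toBilin'.IsNonsingularZero a) :
    ∃ a, G.toBilin'.IsNonsingularZero a ∧
      intHeight a ≤ 2 * (2 * Fintype.card ι * (Nat.sqrt H + 1)) ^ (Fintype.card ι - 1) := by
  obtain ⟨a, ha⟩ := h
  obtain ⟨i, -⟩ := Function.ne_iff.1 ha.ne_zero
  have hn : 0 < Fintype.card ι := Fintype.card_pos_iff.2 ⟨i⟩
  refine exists_isNonsingularZero_intHeight_le hG hGH ?_ ?_ ⟨a, ha⟩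
  · nlinarith [Nat.zero_le (Nat.sqrt H)]
  · have hn2 : 0 < Fintype.card ι ^ 2 := by positivity
    nlinarith [Nat.mul_lt_mul_of_pos_left (Nat.lt_succ_sqrt' H) hn2]

theorem intCast_toBilin'_apply {f : ι → ι → ℚ} {c : ℚ} (hGf : ∀ i j, (G i j : ℚ) = c * f i j)
    {X Y : ι → ℤ} {x y : ι → ℚ} {d e : ℚ} (hX : ∀ i, (X i : ℚ) = d * x i)
    (hY : ∀ i, (Y i : ℚ) = e * y i) :
    (G.toBilin' X Y : ℚ) = c * d * e * ∑ i, ∑ j, f i j * x i * y j := by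
  simp only [Matrix.toBilin'_apply, Int.cast_sum, Int.cast_mul, hGf, hX, hY, mul_sum]
  exact sum_congr rfl fun i _ => sum_congr rfl fun j _ => by ring

theorem isNonsingularZero_toBilin'_iff {f : ι → ι → ℚ} {c : ℚ} (hc : c ≠ 0)
    (hGf : ∀ i j, (G i j : ℚ) = c * f i j) {X : ι → ℤ} {x : ι → ℚ} {d : ℚ} (hd : d ≠ 0)
    (hX : ∀ i, (X i : ℚ) = d * x i) :
    G.toBilin'.IsNonsingularZero X ↔
      (∑ i, ∑ j, f i j * x i * x j = 0) ∧ ∃ y : ι → ℚ, ∑ i, ∑ j, f i j * x i * y j ≠ 0 := by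
  constructor
  · rintro ⟨h0, h1⟩
    obtain ⟨Y, hY⟩ := DFunLike.ne_iff.1 h1
    have hXX := intCast_toBilin'_apply hGf hX hX
    have hXY := intCast_toBilin'_apply hGf hX (Y := Y) (y := fun i => Y i) (e := 1) (by simp)
    rw [h0, Int.cast_zero] at hXX
    refine ⟨by simpa [hc, hd] using hXX.symm, fun i => Y i, fun h => hY ?_⟩
    rw [h, mul_zero, Int.cast_eq_zero] at hXY
    simpa using hXY
  · rintro ⟨h0, y, hy⟩
    obtain ⟨e, he, Y, hY⟩ := exists_intCast_eq_mul y
    refine ⟨?_, DFunLike.ne_iff.2 ⟨Y, ?_⟩⟩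
    · have hXX := intCast_toBilin'_apply hGf hX hX
      rwa [h0, mul_zero, Int.cast_eq_zero] at hXX
    · rw [LinearMap.zero_apply, Ne, ← Int.cast_eq_zero (α := ℚ),
        intCast_toBilin'_apply hGf hX hY]
      simp [hc, hd, he, hy]

end IntForms

theorem natCast_two_mul_mul_sqrt_add_one_pow_le {N H : ℕ} (hN : 1 ≤ N) (hH : 1 ≤ H) :
    ((2 * N * (Nat.sqrt H + 1) : ℕ) : ℝ) ^ (N - 1) ≤
      (4 * N) ^ (N - 1) * (H : ℝ) ^ (((N : ℝ) - 1) / 2) := by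
  have h1 : ((Nat.sqrt H : ℕ) : ℝ) ≤ √H :=
    Real.le_sqrt_of_sq_le (by exact_mod_cast Nat.sqrt_le' H)
  have h2 : (1 : ℝ) ≤ √H := Real.one_le_sqrt.2 (by exact_mod_cast hH)
  calc ((2 * N * (Nat.sqrt H + 1) : ℕ) : ℝ) ^ (N - 1) ≤ (2 * N * (2 * √H)) ^ (N - 1) := by
        push_cast; gcongr; linarith
    _ = (4 * N * √H) ^ (N - 1) := by ring
    _ = (4 * N) ^ (N - 1) * (H : ℝ) ^ (((N : ℝ) - 1) / 2) := by
        rw [mul_pow, Real.sqrt_eq_rpow, ← Real.rpow_mul_natCast (by positivity), Nat.cast_sub hN]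
        ring_nf

theorem small_nonsingular_zero_general (N : ℕ) :
    ∃ C : ℝ, 0 < C ∧
      ∀ (f : Fin N → Fin N → ℚ), (∀ i j, f i j = f j i) →
      (∃ x : Fin N → ℚ, (∑ i, ∑ j, f i j * x i * x j = 0) ∧
        ∃ y : Fin N → ℚ, ∑ i, ∑ j, f i j * x i * y j ≠ 0) →
      ∃ x : Fin N → ℚ, (∑ i, ∑ j, f i j * x i * x j = 0) ∧
        (∃ y : Fin N → ℚ, ∑ i, ∑ j, f i j * x i * y j ≠ 0) ∧
        ((projHeight x : ℕ) : ℝ) ≤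
          C * ((projHeight fun p : Fin N × Fin N => f p.1 p.2 : ℕ) : ℝ) ^ (((N : ℝ) - 1) / 2) := by
  refine ⟨2 * (4 * N) ^ (N - 1), by cases N with | zero => norm_num | succ n => positivity,
    fun f hf ⟨x₀, hx₀, y₀, hy₀⟩ => ?_⟩
  have hN : 1 ≤ N := Nat.pos_of_ne_zero (by rintro rfl; simp at hy₀)
  have hF : (fun p : Fin N × Fin N => f p.1 p.2) ≠ 0 := fun h => hy₀ (by
    simp [show ∀ i j, f i j = 0 from fun i j => congrFun h (i, j)])
  obtain ⟨c, hc, G, hG, hGf, hGH⟩ := exists_isSymm_intMatrix_eq_mul hf hF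
  obtain ⟨d, hd, X, hX⟩ := exists_intCast_eq_mul x₀
  obtain ⟨a, ha, haK⟩ := exists_isNonsingularZero_intHeight_le_sqrt hG hGH
    ⟨X, (isNonsingularZero_toBilin'_iff hc hGf hd hX).2 ⟨hx₀, y₀, hy₀⟩⟩
  rw [Fintype.card_fin] at haK
  obtain ⟨hza, hy⟩ :=
    (isNonsingularZero_toBilin'_iff hc hGf one_ne_zero (x := fun i => a i) (by simp)).1 ha
  refine ⟨fun i => a i, hza, hy, ?_⟩
  calc ((projHeight fun i => (a i : ℚ) : ℕ) : ℝ) ≤ intHeight a := by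
        exact_mod_cast projHeight_le_intHeight ha.ne_zero one_ne_zero (by simp)
    _ ≤ 2 * ((2 * N * (Nat.sqrt _ + 1) : ℕ) : ℝ) ^ (N - 1) := by exact_mod_cast haK
    _ ≤ _ := by
        rw [mul_assoc (2 : ℝ)]
        gcongr
        exact natCast_two_mul_mul_sqrt_add_one_pow_le hN (one_le_projHeight hF)

/-- **Cassels' bound for nonsingular zeros.** For every `N ≥ 2` there is a constant `C_N` such
that: if a quadratic form `F` over ℚ in `N` variables has a nonsingular zero (a zero `x` with
`F(x,y) ≠ 0` for some `y`), then it has such a zero `x` with `H(x) ≤ C_N · H(F)^((N−1)/2)`. -/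
theorem small_nonsingular_zero (N : ℕ) (hN : 2 ≤ N) :
    ∃ C : ℝ, 0 < C ∧
      ∀ (f : Fin N → Fin N → ℚ), (∀ i j, f i j = f j i) →
      (∃ x : Fin N → ℚ, (∑ i, ∑ j, f i j * x i * x j = 0) ∧
        ∃ y : Fin N → ℚ, ∑ i, ∑ j, f i j * x i * y j ≠ 0) →
      ∃ x : Fin N → ℚ, (∑ i, ∑ j, f i j * x i * x j = 0) ∧
        (∃ y : Fin N → ℚ, ∑ i, ∑ j, f i j * x i * y j ≠ 0) ∧
        ((projHeight x : ℕ) : ℝ) ≤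
          C * ((projHeight fun p : Fin N × Fin N => f p.1 p.2 : ℕ) : ℝ) ^ (((N : ℝ) - 1) / 2) :=
  small_nonsingular_zero_general N
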